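/- (Uniqueness of normal form) For every A ∈ L'', if A = A' and A = A'' are both provable in the equational calculus I'' with A' and A'' normal, then A' and A'' coincide (are identical terms). -/

import Mathlib

/-- Binary trees: the set `L₁` generated by `□` and `∧`. -/
inductive L1 : Type
  | box : L1
  | wedge : L1 → L1 → L1
  deriving DecidableEq

namespace L1

/-- `|X|`: the number of occurrences of `□` in `X`. -/
def leaves : L1 → ℕ
  | box => 1
  | wedge X Y => X.leaves + Y.leaves

/-- Insertion `X ◁ₙ Z` in `L₁` (total extension of the partial operation;
on its domain `1 ≤ n ≤ |X|` it agrees with the defining clauses). -/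
def ins : L1 → ℕ → L1 → L1
  | box, _, Z => Z
  | wedge X Y, n, Z =>
      if n ≤ X.leaves then wedge (X.ins n Z) Y else wedge X (Y.ins (n - X.leaves) Z)

end L1

/-- Raw terms over the generator `2` and the insertion operations `◁ₙ`. -/
inductive T2 : Type
  | two : T2
  | ins : T2 → ℕ → T2 → T2
  deriving DecidableEq

namespace T2

/-- `|A|` for terms: `|2| = 2` and `|A ◁ₙ B| = |A| + |B| - 1`. -/
def size : T2 → ℕ
  | two => 2
  | ins A _ B => A.size + B.size - 1

/-- Membership in `L''`: each insertion `A ◁ₙ B` requires `1 ≤ n ≤ |A|`. -/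
def WF : T2 → Prop
  | two => True
  | ins A n B => A.WF ∧ B.WF ∧ 1 ≤ n ∧ n ≤ A.size

/-- The interpretation `v : L'' → L₁`, with `v 2 = □∧□` and
`v (A ◁ₙ B) = v A ◁ₙ v B`. -/
def val : T2 → L1
  | two => L1.wedge L1.box L1.box
  | ins A n B => A.val.ins n B.val

end T2

/-- The equational calculus `I''` on `L''`: the congruence (with respect to the
operations `◁ₙ`, on well-formed, i.e. defined, terms) generated by the axioms
(assoc 1) and (assoc 2). -/
inductive I2 : T2 → T2 → Prop
  | refl (A : T2) (h : A.WF) : I2 A A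
  | symm {A B : T2} : I2 A B → I2 B A
  | trans {A B C : T2} : I2 A B → I2 B C → I2 A C
  | congr {A B C D : T2} {n : ℕ} : I2 A B → I2 C D →
      (T2.ins A n C).WF → (T2.ins B n D).WF →
      I2 (T2.ins A n C) (T2.ins B n D)
  | assoc1 {A B C : T2} {n m : ℕ} :
      ((A.ins n B).ins m C).WF → n ≤ m → m < n + B.size →
      I2 ((A.ins n B).ins m C) (A.ins n (B.ins (m - n + 1) C))
  | assoc2 {A B C : T2} {n m : ℕ} :
      ((A.ins n B).ins m C).WF → n + B.size ≤ m →
      I2 ((A.ins n B).ins m C) ((A.ins (m - B.size + 1) C).ins n B)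

/-- A term of `L''` is *normal* when it has no subterm of the form
`(X ◁ₙ Y) ◁ₘ Z` with `n ≤ m`. -/
def T2.Normal : T2 → Prop
  | T2.two => True
  | T2.ins A m B => A.Normal ∧ B.Normal ∧ ∀ (X : T2) (n : ℕ) (Y : T2), A = T2.ins X n Y → m < n

/-!
Provable equality is sound for the interpretation `v` in binary trees, since both associativity
axioms hold for insertion of trees. Conversely a normal term is `2`, `2 ◁₁ B`, `2 ◁₂ B` or
`(2 ◁₂ B) ◁₁ C` with `B`, `C` normal, with values `□∧□`, `v B ∧ □`, `□ ∧ v B` and `v C ∧ v B`,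
so `v` has a left inverse on normal terms: two normal terms with a common value coincide.
-/

namespace L1

lemma one_le_leaves (X : L1) : 1 ≤ X.leaves := by
  induction X with
  | box => exact le_rfl
  | wedge X Y ihX ihY => simp only [leaves]; omega

lemma leaves_ins {X : L1} {n : ℕ} (Z : L1) (hn1 : 1 ≤ n) (hn2 : n ≤ X.leaves) :
    (X.ins n Z).leaves = X.leaves + Z.leaves - 1 := by
  induction X generalizing n with
  | box => simp [ins, leaves]
  | wedge X Y ihX ihY =>
    have := Z.one_le_leaves
    simp only [leaves] at hn2
    by_cases h : n ≤ X.leaves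
    · simp only [ins, if_pos h, leaves, ihX hn1 h]
      omega
    · simp only [ins, if_neg h, leaves, ihY (n := n - X.leaves) (by omega) (by omega)]
      have := X.one_le_leaves
      omega

lemma ins_ins_assoc {X : L1} {n m : ℕ} (Y Z : L1) (hn1 : 1 ≤ n) (hnX : n ≤ X.leaves)
    (hnm : n ≤ m) (hm : m < n + Y.leaves) :
    (X.ins n Y).ins m Z = X.ins n (Y.ins (m - n + 1) Z) := by
  induction X generalizing n m with
  | box =>
    obtain rfl : n = 1 := by simp only [leaves] at hnX; omega
    simp only [ins, Nat.sub_add_cancel hnm]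
  | wedge X₁ X₂ ih₁ ih₂ =>
    simp only [leaves] at hnX
    by_cases h : n ≤ X₁.leaves
    · have hm' : m ≤ (X₁.ins n Y).leaves := by rw [leaves_ins Y hn1 h]; omega
      simp only [ins, if_pos h, if_pos hm', ih₁ hn1 h hnm hm]
    · have hm' : ¬m ≤ X₁.leaves := by omega
      simp only [ins, if_neg h, if_neg hm',
        ih₂ (n := n - X₁.leaves) (m := m - X₁.leaves) (by omega) (by omega) (by omega) (by omega)]
      rw [show m - X₁.leaves - (n - X₁.leaves) = m - n by omega]

lemma ins_ins_comm {X : L1} {n m : ℕ} (Y Z : L1) (hn1 : 1 ≤ n) (hnX : n ≤ X.leaves)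
    (hnm : n + Y.leaves ≤ m) (hm : m < X.leaves + Y.leaves) :
    (X.ins n Y).ins m Z = (X.ins (m - Y.leaves + 1) Z).ins n Y := by
  induction X generalizing n m with
  | box => simp only [leaves] at hnX hm; omega
  | wedge X₁ X₂ ih₁ ih₂ =>
    simp only [leaves] at hnX hm
    have := X₁.one_le_leaves
    have := Y.one_le_leaves
    by_cases h : n ≤ X₁.leaves
    · have hY := leaves_ins Y hn1 h
      by_cases h' : m < X₁.leaves + Y.leaves
      · have hk : m - Y.leaves + 1 ≤ X₁.leaves := by omega
        have hm' : m ≤ (X₁.ins n Y).leaves := by omega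
        have hn' : n ≤ (X₁.ins (m - Y.leaves + 1) Z).leaves := by
          rw [leaves_ins Z (by omega) hk]; omega
        simp only [ins, if_pos h, if_pos hm', if_pos hk, if_pos hn', ih₁ hn1 h hnm h']
      · have hm' : ¬m ≤ X₁.leaves + Y.leaves - 1 := by omega
        have hk : ¬m - Y.leaves + 1 ≤ X₁.leaves := by omega
        simp only [ins, if_pos h, hY, if_neg hm', if_neg hk]
        rw [show m - (X₁.leaves + Y.leaves - 1) = m - Y.leaves + 1 - X₁.leaves by omega]
    · have hm' : ¬m ≤ X₁.leaves := by omega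
      have hk : ¬m - Y.leaves + 1 ≤ X₁.leaves := by omega
      simp only [ins, if_neg h, if_neg hm', if_neg hk,
        ih₂ (n := n - X₁.leaves) (m := m - X₁.leaves) (by omega) (by omega) (by omega) (by omega)]
      rw [show m - X₁.leaves - Y.leaves + 1 = m - Y.leaves + 1 - X₁.leaves by omega]

end L1

namespace T2

lemma two_le_size {A : T2} (h : A.WF) : 2 ≤ A.size := by
  induction A with
  | two => exact le_rfl
  | ins A n B ihA ihB =>
    have := ihA h.1
    have := ihB h.2.1
    simp only [size]
    omega

lemma leaves_val {A : T2} (h : A.WF) : A.val.leaves = A.size := by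
  induction A with
  | two => rfl
  | ins A n B ihA ihB =>
    obtain ⟨hA, hB, hn1, hn2⟩ := h
    simp only [val, size]
    rw [L1.leaves_ins _ hn1 (by rwa [ihA hA]), ihA hA, ihB hB]

end T2

namespace I2

lemma wf {A B : T2} (h : I2 A B) : A.WF ∧ B.WF := by
  induction h with
  | refl A h => exact ⟨h, h⟩
  | symm _ ih => exact ih.symm
  | trans _ _ ih₁ ih₂ => exact ⟨ih₁.1, ih₂.2⟩
  | congr _ _ h₁ h₂ => exact ⟨h₁, h₂⟩
  | assoc1 hwf _ hm =>
    refine ⟨hwf, ?_⟩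
    obtain ⟨⟨hA, hB, hn1, hn2⟩, hC, -⟩ := hwf
    have := T2.two_le_size hC
    exact ⟨hA, ⟨hB, hC, by omega, by omega⟩, hn1, hn2⟩
  | assoc2 hwf _ =>
    refine ⟨hwf, ?_⟩
    obtain ⟨⟨hA, hB, hn1, hn2⟩, hC, -, hm2⟩ := hwf
    have := T2.two_le_size hB
    have := T2.two_le_size hC
    simp only [T2.size] at hm2
    exact ⟨⟨hA, hC, by omega, by omega⟩, hB, hn1, by simp only [T2.size]; omega⟩

lemma val_eq {A B : T2} (h : I2 A B) : A.val = B.val := by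
  induction h with
  | refl => rfl
  | symm _ ih => exact ih.symm
  | trans _ _ ih₁ ih₂ => exact ih₁.trans ih₂
  | congr _ _ _ _ ih₁ ih₂ => simp only [T2.val, ih₁, ih₂]
  | assoc1 hwf hnm hm =>
    obtain ⟨⟨hA, hB, hn1, hn2⟩, -⟩ := hwf
    exact L1.ins_ins_assoc _ _ hn1 (by rwa [T2.leaves_val hA]) hnm
      (by rwa [T2.leaves_val hB])
  | assoc2 hwf hm =>
    obtain ⟨⟨hA, hB, hn1, hn2⟩, -, -, hm2⟩ := hwf
    have := T2.two_le_size hA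
    have := T2.two_le_size hB
    simp only [T2.size] at hm2
    simp only [T2.val]
    rw [L1.ins_ins_comm _ _ hn1 (by rwa [T2.leaves_val hA]) (by rwa [T2.leaves_val hB])
      (by rw [T2.leaves_val hA, T2.leaves_val hB]; omega), T2.leaves_val hB]

end I2

namespace T2

inductive NormalShape : T2 → Prop
  | two : NormalShape .two
  | left {B : T2} : NormalShape B → NormalShape (.ins .two 1 B)
  | right {B : T2} : NormalShape B → NormalShape (.ins .two 2 B)
  | both {B C : T2} : NormalShape B → NormalShape C → NormalShape (.ins (.ins .two 2 B) 1 C)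

lemma Normal.normalShape {A : T2} (hwf : A.WF) (hn : A.Normal) : A.NormalShape := by
  induction A with
  | two => exact .two
  | ins A₀ n B ih₀ ihB =>
    obtain ⟨hwf₀, hwfB, hn1, hn2⟩ := hwf
    have hB := ihB hwfB hn.2.1
    cases ih₀ hwf₀ hn.1 with
    | two =>
      obtain rfl | rfl : n = 1 ∨ n = 2 := by simp only [size] at hn2; omega
      exacts [.left hB, .right hB]
    | left => exact absurd (hn.2.2 _ _ _ rfl) (by omega)
    | right hB' =>
      obtain rfl : n = 1 := by have := hn.2.2 _ _ _ rfl; omega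
      exact .both hB' hB
    | both => exact absurd (hn.2.2 _ _ _ rfl) (by omega)

lemma exists_val_eq_wedge (A : T2) : ∃ X Y, A.val = .wedge X Y := by
  induction A with
  | two => exact ⟨_, _, rfl⟩
  | ins A n B ihA =>
    obtain ⟨X, Y, h⟩ := ihA
    rw [val, h, L1.ins]
    split <;> exact ⟨_, _, rfl⟩

lemma val_ins_two_one (B : T2) : (ins two 1 B).val = .wedge B.val .box := rfl

lemma val_ins_two_two (B : T2) : (ins two 2 B).val = .wedge .box B.val := rfl

lemma val_ins_ins_two_two_one (B C : T2) :
    (ins (ins two 2 B) 1 C).val = .wedge C.val B.val := rfl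

end T2

namespace L1

def toNormal : L1 → T2
  | box => .two
  | wedge box box => .two
  | wedge (wedge X₁ X₂) box => .ins .two 1 (wedge X₁ X₂).toNormal
  | wedge box (wedge Y₁ Y₂) => .ins .two 2 (wedge Y₁ Y₂).toNormal
  | wedge (wedge X₁ X₂) (wedge Y₁ Y₂) =>
      .ins (.ins .two 2 (wedge Y₁ Y₂).toNormal) 1 (wedge X₁ X₂).toNormal

end L1

namespace T2

lemma NormalShape.toNormal_val {A : T2} (hA : A.NormalShape) : A.val.toNormal = A := by
  induction hA with
  | two => rfl
  | @left B _ ih =>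
    obtain ⟨X, Y, h⟩ := B.exists_val_eq_wedge
    rw [val_ins_two_one, h, L1.toNormal, ← h, ih]
  | @right B _ ih =>
    obtain ⟨X, Y, h⟩ := B.exists_val_eq_wedge
    rw [val_ins_two_two, h, L1.toNormal, ← h, ih]
  | @both B C _ _ ihB ihC =>
    obtain ⟨X, Y, hB⟩ := B.exists_val_eq_wedge
    obtain ⟨Z, W, hC⟩ := C.exists_val_eq_wedge
    rw [val_ins_ins_two_two_one, hB, hC, L1.toNormal, ← hB, ← hC, ihB, ihC]

lemma eq_of_val_eq {A B : T2} (hA : A.WF) (hB : B.WF) (hnA : A.Normal) (hnB : B.Normal)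
    (h : A.val = B.val) : A = B := by
  rw [← (hnA.normalShape hA).toNormal_val, ← (hnB.normalShape hB).toNormal_val, h]

end T2

theorem normal_form_unique_general (A A' A'' : T2)
    (h1 : I2 A A') (h2 : I2 A A'') (hn1 : A'.Normal) (hn2 : A''.Normal) :
    A' = A'' :=
  T2.eq_of_val_eq h1.wf.2 h2.wf.2 hn1 hn2 (h1.val_eq.symm.trans h2.val_eq)

theorem normal_form_unique (A A' A'' : T2) (hA : A.WF)
    (h1 : I2 A A') (h2 : I2 A A'') (hn1 : A'.Normal) (hn2 : A''.Normal) :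
    A' = A'' :=
  normal_form_unique_general A A' A'' h1 h2 hn1 hn2
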